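/- If for every finitely generated right ideal I of R the character module I⁺ is either injective or pi-indigent, then either R is left absolutely pure or the weak global dimension of R is at most 1. -/

import Mathlib

universe u

open LinearMap MulOpposite

/-! Character module -/

/-- The character group `M⁺ = Hom_ℤ(M, ℚ/ℤ)`. -/
abbrev CharMod (M : Type u) [AddCommGroup M] : Type u := M →+ AddCircle (1 : ℚ)

/-- If `M` is a left `S`-module, then `M⁺` is a right `S`-module via `(f • r) m = f (r • m)`. -/
instance CharMod.moduleRight (S : Type u) [Ring S] (M : Type u) [AddCommGroup M]
    [Module S M] : Module Sᵐᵒᵖ (CharMod M) where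
  smul r f := f.comp (DistribMulAction.toAddMonoidHom M (unop r))
  one_smul f := by
    apply AddMonoidHom.ext; intro m
    show f ((unop (1 : Sᵐᵒᵖ)) • m) = f m
    simp
  mul_smul r s f := by
    apply AddMonoidHom.ext; intro m
    show f ((unop (r * s)) • m) = f ((unop s) • ((unop r) • m))
    simp [mul_smul]
  smul_zero r := by apply AddMonoidHom.ext; intro m; rfl
  smul_add r f g := by apply AddMonoidHom.ext; intro m; rfl
  add_smul r s f := by
    apply AddMonoidHom.ext; intro m
    show f ((unop (r + s)) • m) = f ((unop r) • m) + f ((unop s) • m)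
    rw [unop_add, add_smul, map_add]
  zero_smul f := by
    apply AddMonoidHom.ext; intro m
    show f ((unop (0 : Sᵐᵒᵖ)) • m) = 0
    simp

/-- If `M` is a right `S`-module, then `M⁺` is a left `S`-module via `(r • f) m = f (m • r)`. -/
instance CharMod.moduleLeft (S : Type u) [Ring S] (M : Type u) [AddCommGroup M]
    [Module Sᵐᵒᵖ M] : Module S (CharMod M) where
  smul r f := f.comp (DistribMulAction.toAddMonoidHom M (op r))
  one_smul f := by
    apply AddMonoidHom.ext; intro m
    show f ((op (1 : S)) • m) = f m
    simp
  mul_smul r s f := by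
    apply AddMonoidHom.ext; intro m
    show f ((op (r * s)) • m) = f ((op s) • ((op r) • m))
    rw [← mul_smul, ← op_mul]
  smul_zero r := by apply AddMonoidHom.ext; intro m; rfl
  smul_add r f g := by apply AddMonoidHom.ext; intro m; rfl
  add_smul r s f := by
    apply AddMonoidHom.ext; intro m
    show f ((op (r + s)) • m) = f ((op r) • m) + f ((op s) • m)
    rw [op_add, add_smul, map_add]
  zero_smul f := by
    apply AddMonoidHom.ext; intro m
    show f ((op (0 : S)) • m) = 0
    simp

/-! Tensor product of a right module and a left module over a (possibly noncommutative) ring -/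

section Tensor

variable (S : Type u) [Ring S]

/-- The bilinearity relations defining `M ⊗_S N` as a quotient of `M ⊗_ℤ N`. -/
def tensorRel (M N : Type u) [AddCommGroup M] [Module Sᵐᵒᵖ M] [AddCommGroup N] [Module S N] :
    Submodule ℤ (TensorProduct ℤ M N) :=
  Submodule.span ℤ {x | ∃ (m : M) (r : S) (n : N),
    x = (op r • m) ⊗ₜ[ℤ] n - m ⊗ₜ[ℤ] (r • n)}

/-- `M ⊗_S N` for a right `S`-module `M` and a left `S`-module `N`. -/
def RTensor (M N : Type u) [AddCommGroup M] [Module Sᵐᵒᵖ M] [AddCommGroup N] [Module S N] :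
    Type u := TensorProduct ℤ M N ⧸ tensorRel S M N

noncomputable instance (M N : Type u) [AddCommGroup M] [Module Sᵐᵒᵖ M] [AddCommGroup N] [Module S N] :
    AddCommGroup (RTensor S M N) :=
  inferInstanceAs (AddCommGroup (TensorProduct ℤ M N ⧸ tensorRel S M N))

/-- Functoriality of `M ⊗_S -` in the left-module variable. -/
noncomputable def rTensorMap (M : Type u) [AddCommGroup M] [Module Sᵐᵒᵖ M] {N B : Type u}
    [AddCommGroup N] [Module S N] [AddCommGroup B] [Module S B] (g : N →ₗ[S] B) :
    RTensor S M N →ₗ[ℤ] RTensor S M B :=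
  Submodule.mapQ _ _ (TensorProduct.map LinearMap.id g.toAddMonoidHom.toIntLinearMap)
    (by
      rw [tensorRel, Submodule.span_le]
      rintro x ⟨m, r, n, rfl⟩
      show TensorProduct.map LinearMap.id g.toAddMonoidHom.toIntLinearMap
        ((op r • m) ⊗ₜ[ℤ] n - m ⊗ₜ[ℤ] (r • n)) ∈ tensorRel S M B
      rw [map_sub, TensorProduct.map_tmul, TensorProduct.map_tmul]
      simp only [LinearMap.id_apply, AddMonoidHom.coe_toIntLinearMap, LinearMap.toAddMonoidHom_coe]
      rw [map_smul]
      exact Submodule.subset_span ⟨m, r, g n, rfl⟩)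

/-- Functoriality of `- ⊗_S N` in the right-module variable. -/
noncomputable def lTensorMap {M B : Type u} [AddCommGroup M] [Module Sᵐᵒᵖ M] [AddCommGroup B]
    [Module Sᵐᵒᵖ B] (h : M →ₗ[Sᵐᵒᵖ] B) (N : Type u) [AddCommGroup N] [Module S N] :
    RTensor S M N →ₗ[ℤ] RTensor S B N :=
  Submodule.mapQ _ _ (TensorProduct.map h.toAddMonoidHom.toIntLinearMap LinearMap.id)
    (by
      rw [tensorRel, Submodule.span_le]
      rintro x ⟨m, r, n, rfl⟩
      show TensorProduct.map h.toAddMonoidHom.toIntLinearMap LinearMap.id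
        ((op r • m) ⊗ₜ[ℤ] n - m ⊗ₜ[ℤ] (r • n)) ∈ tensorRel S B N
      rw [map_sub, TensorProduct.map_tmul, TensorProduct.map_tmul]
      simp only [LinearMap.id_apply, AddMonoidHom.coe_toIntLinearMap, LinearMap.toAddMonoidHom_coe]
      rw [map_smul]
      exact Submodule.subset_span ⟨h m, r, n, rfl⟩)

end Tensor

/-! Basic relative homological notions -/

section Defs

variable (S : Type u) [Ring S]

/-- `M` is `N`-subinjective: every map `N → M` extends along every embedding of `N`. -/
def Subinjective (N M : Type u) [AddCommGroup N] [Module S N] [AddCommGroup M]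
    [Module S M] : Prop :=
  ∀ (K : Type u) [AddCommGroup K] [Module S K] (i : N →ₗ[S] K), Function.Injective i →
    ∀ f : N →ₗ[S] M, ∃ h : K →ₗ[S] M, h ∘ₗ i = f

/-- `M` is an injective module. -/
def InjMod (M : Type u) [AddCommGroup M] [Module S M] : Prop :=
  ∀ (N : Type u) [AddCommGroup N] [Module S N], Subinjective S N M

/-- `M` is `N`-subprojective. -/
def Subprojective (M N : Type u) [AddCommGroup M] [Module S M] [AddCommGroup N]
    [Module S N] : Prop :=
  ∀ (B : Type u) [AddCommGroup B] [Module S B] (g : B →ₗ[S] N), Function.Surjective g →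
    ∀ f : M →ₗ[S] N, ∃ h : M →ₗ[S] B, g ∘ₗ h = f

/-- A monomorphism of left `S`-modules is pure if it stays injective after
tensoring with any right `S`-module. -/
def IsPureMono {A B : Type u} [AddCommGroup A] [Module S A] [AddCommGroup B] [Module S B]
    (i : A →ₗ[S] B) : Prop :=
  Function.Injective i ∧
    ∀ (M : Type u) [AddCommGroup M] [Module Sᵐᵒᵖ M], Function.Injective (rTensorMap S M i)

/-- `N` is absolutely pure (fp-injective): every embedding of `N` is pure. -/
def AbsPure (N : Type u) [AddCommGroup N] [Module S N] : Prop :=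
  ∀ (K : Type u) [AddCommGroup K] [Module S K] (i : N →ₗ[S] K), Function.Injective i →
    IsPureMono S i

/-- `N` is absolutely `M`-pure, for a right module `M`. -/
def AbsMPure (M : Type u) [AddCommGroup M] [Module Sᵐᵒᵖ M] (N : Type u) [AddCommGroup N]
    [Module S N] : Prop :=
  ∀ (B : Type u) [AddCommGroup B] [Module S B] (i : N →ₗ[S] B), Function.Injective i →
    Function.Injective (rTensorMap S M i)

/-- `M` is pure-injective: maps into `M` extend along pure monomorphisms. -/
def PureInjective (M : Type u) [AddCommGroup M] [Module S M] : Prop :=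
  ∀ (A B : Type u) [AddCommGroup A] [Module S A] [AddCommGroup B] [Module S B]
    (i : A →ₗ[S] B), IsPureMono S i → ∀ f : A →ₗ[S] M, ∃ h : B →ₗ[S] M, h ∘ₗ i = f

/-- `M` is indigent: its subinjectivity domain is exactly the injective modules. -/
def Indigent (M : Type u) [AddCommGroup M] [Module S M] : Prop :=
  ∀ (N : Type u) [AddCommGroup N] [Module S N], Subinjective S N M ↔ InjMod S N

/-- `M` is pi-indigent: `M` is pure-injective and its subinjectivity domain is exactly
the absolutely pure modules. -/
def PiIndigent (M : Type u) [AddCommGroup M] [Module S M] : Prop :=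
  PureInjective S M ∧
    ∀ (N : Type u) [AddCommGroup N] [Module S N], Subinjective S N M ↔ AbsPure S N

/-- Flatness via the equational criterion. -/
def FlatMod (M : Type u) [AddCommGroup M] [Module S M] : Prop :=
  ∀ (n : ℕ) (r : Fin n → S) (x : Fin n → M), (∑ i, r i • x i) = 0 →
    ∃ (m : ℕ) (a : Fin n → Fin m → S) (y : Fin m → M),
      (∀ i, x i = ∑ j, a i j • y j) ∧ ∀ j, (∑ i, r i * a i j) = 0

/-- Finitely presented module. -/
def FPMod (M : Type u) [AddCommGroup M] [Module S M] : Prop :=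
  ∃ (n : ℕ) (K : Submodule S (Fin n → S)), K.FG ∧
    Nonempty ((((Fin n → S)) ⧸ K) ≃ₗ[S] M)

/-- `Ext¹_S(M, N) = 0`, expressed by the splitting of every extension of `N` by `M`. -/
def ExtVanish (M N : Type u) [AddCommGroup M] [Module S M] [AddCommGroup N] [Module S N] :
    Prop :=
  ∀ (B : Type u) [AddCommGroup B] [Module S B] (i : N →ₗ[S] B) (p : B →ₗ[S] M),
    Function.Injective i → Function.Surjective p → LinearMap.range i = LinearMap.ker p →
      ∃ s : M →ₗ[S] B, p ∘ₗ s = LinearMap.id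

/-- `Tor₁^S(N, T) = 0` for a right module `N` and a left module `T`. -/
def TorVanish (N : Type u) [AddCommGroup N] [Module Sᵐᵒᵖ N] (T : Type u) [AddCommGroup T]
    [Module S T] : Prop :=
  ∀ (P K : Type u) [AddCommGroup P] [Module Sᵐᵒᵖ P] [AddCommGroup K] [Module Sᵐᵒᵖ K]
    (i : K →ₗ[Sᵐᵒᵖ] P) (p : P →ₗ[Sᵐᵒᵖ] N), Module.Projective Sᵐᵒᵖ P →
      Function.Injective i → Function.Surjective p →
        LinearMap.range i = LinearMap.ker p → Function.Injective (lTensorMap S i T)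

/-- `M` is a Whitehead test module for injectivity (i-test). -/
def ITest (M : Type u) [AddCommGroup M] [Module S M] : Prop :=
  ∀ (N : Type u) [AddCommGroup N] [Module S N], ExtVanish S M N → InjMod S N

/-- `S` is (left) n-saturated: `S` is not semisimple and every finitely generated
non-projective module is i-test. -/
def NSaturated : Prop :=
  ¬ IsSemisimpleRing S ∧ ∀ (M : Type u) [AddCommGroup M] [Module S M],
    Module.Finite S M → ¬ Module.Projective S M → ITest S M

/-- A submodule is essential if it intersects every nonzero submodule nontrivially. -/
def EssentialIn {M : Type u} [AddCommGroup M] [Module S M] (A : Submodule S M) : Prop :=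
  ∀ B : Submodule S M, B ≠ ⊥ → A ⊓ B ≠ ⊥

/-- `M` is a singular module: every element is annihilated by an essential left ideal. -/
def SingularMod (M : Type u) [AddCommGroup M] [Module S M] : Prop :=
  ∀ x : M, EssentialIn S (LinearMap.ker (LinearMap.toSpanSingleton S M x))

/-- `S` is (left) nonsingular: `Z(S) = 0`. -/
def NonsingularRing : Prop :=
  ∀ r : S, EssentialIn S (LinearMap.ker (LinearMap.toSpanSingleton S S r)) → r = 0

/-- The socle of a module: the supremum of its simple submodules. -/
def socle (M : Type u) [AddCommGroup M] [Module S M] : Submodule S M :=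
  sSup {N : Submodule S M | IsAtom N}

/-- von Neumann regular ring. -/
def IsVNR : Prop := ∀ a : S, ∃ r : S, a * r * a = a

/-- (left) V-ring: every simple module is injective. -/
def VRing : Prop :=
  ∀ (M : Type u) [AddCommGroup M] [Module S M], IsSimpleModule S M → InjMod S M

/-- (left) hereditary: every left ideal is projective. -/
def HereditaryRing : Prop := ∀ I : Submodule S S, Module.Projective S I

/-- (left) semihereditary: every finitely generated left ideal is projective. -/
def SemihereditaryRing : Prop := ∀ I : Submodule S S, I.FG → Module.Projective S I

/-- (left) SI-ring: every singular module is injective. -/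
def SIRing : Prop :=
  ∀ (M : Type u) [AddCommGroup M] [Module S M], SingularMod S M → InjMod S M

/-- quasi-Frobenius ring: two-sided Noetherian and self-injective. -/
def QFRing : Prop :=
  IsNoetherianRing S ∧ IsNoetherianRing Sᵐᵒᵖ ∧ InjMod S S ∧ InjMod Sᵐᵒᵖ S

/-- A module is uniserial if its submodules are totally ordered. -/
def Uniserial (M : Type u) [AddCommGroup M] [Module S M] : Prop :=
  ∀ A B : Submodule S M, A ≤ B ∨ B ≤ A

/-- (left) serial ring: `S` is a finite direct sum of uniserial left ideals. -/
def SerialRing : Prop :=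
  ∃ (n : ℕ) (f : Fin n → Submodule S S), (∀ i, Uniserial S (f i)) ∧
    iSupIndep f ∧ iSup f = ⊤

/-- (left) coherent: every finitely generated left ideal is finitely presented. -/
def CoherentRing : Prop := ∀ I : Submodule S S, I.FG → FPMod S I

/-- Indecomposable ring: no nontrivial central idempotents. -/
def IndecompRing : Prop :=
  Nontrivial S ∧ ∀ e : S, e * e = e → (∀ r : S, e * r = r * e) → e = 0 ∨ e = 1

end Defs

/-!
Suppose `R` is not left absolutely pure and let `I` be a finitely generated right ideal.
For every embedding `i : R → K` the multiplication map `I ⊗_R K → K` shows that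
`x ↦ x ⊗ i 1` is injective on `I`; so a map `R → I⁺`, i.e. a character of `I`, extends to a
character of `I ⊗_R K`, which is a map `K → I⁺` by adjunction. Thus `R` lies in the
subinjectivity domain of `I⁺`; as `R` is not absolutely pure, `I⁺` is not pi-indigent, so it
is injective.
An injective character module forces flatness: if a relation `∑ rᵢ xᵢ = 0` in `I` were not
trivial, a character `Φ` of `Iⁿ` vanishing on the trivial relations but not on `x` would have
components `φᵢ ∈ I⁺` with `s ↦ ∑ sᵢ φᵢ` factoring through `s ↦ ∑ sᵢ rᵢ`, hence, by injectivity,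
`φᵢ = rᵢ • H 1` for some `H : R → I⁺`, giving `Φ x = H 1 (∑ rᵢ xᵢ) = 0`. Finally a relation in
an arbitrary right ideal already holds in a finitely generated one.
-/

namespace RTensor

variable (S : Type u) [Ring S] {M N A : Type u} [AddCommGroup M] [Module Sᵐᵒᵖ M]
  [AddCommGroup N] [Module S N] [AddCommGroup A]

noncomputable def tmul : M →ₗ[ℤ] N →ₗ[ℤ] RTensor S M N :=
  (TensorProduct.mk ℤ M N).compr₂ (tensorRel S M N).mkQ

variable {S}

theorem tmul_smul (m : M) (r : S) (n : N) : tmul S (op r • m) n = tmul S m (r • n) :=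
  (Submodule.Quotient.eq _).mpr (Submodule.subset_span ⟨m, r, n, rfl⟩)

noncomputable def lift (B : M →+ N →+ A) (hB : ∀ m (r : S) n, B (op r • m) n = B m (r • n)) :
    RTensor S M N →+ A :=
  let B' := TensorProduct.liftAddHom (R := ℤ) B fun c m n => by simp
  QuotientAddGroup.lift (tensorRel S M N).toAddSubgroup B' fun x hx => by
    suffices tensorRel S M N ≤ LinearMap.ker B'.toIntLinearMap from this hx
    refine Submodule.span_le.mpr ?_
    rintro _ ⟨m, r, n, rfl⟩
    simp [B', hB]

end RTensor

section Subinjective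

variable {R : Type u} [Ring R]

theorem CharMod.smul_apply {M : Type u} [AddCommGroup M] [Module Rᵐᵒᵖ M]
    (r : R) (f : CharMod M) (m : M) : (r • f) m = f (op r • m) := rfl

noncomputable def RTensor.curryChar {M K : Type u} [AddCommGroup M] [Module Rᵐᵒᵖ M]
    [AddCommGroup K] [Module R K] (χ : RTensor R M K →+ AddCircle (1 : ℚ)) :
    K →ₗ[R] CharMod M where
  toFun k := χ.comp ((RTensor.tmul R).flip k).toAddMonoidHom
  map_add' k l := by ext m; simp
  map_smul' r k := by ext m; simp [CharMod.smul_apply, RTensor.tmul_smul]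

theorem exists_extension_charMod_of_injective_tmul {M K : Type u} [AddCommGroup M]
    [Module Rᵐᵒᵖ M] [AddCommGroup K] [Module R K] (i : R →ₗ[R] K)
    (hi : Function.Injective ((RTensor.tmul R (M := M)).flip (i 1)))
    (f : R →ₗ[R] CharMod M) : ∃ h : K →ₗ[R] CharMod M, h ∘ₗ i = f := by
  obtain ⟨χ, hχ⟩ := CharacterModule.dual_surjective_of_injective _ hi (f 1)
  refine ⟨RTensor.curryChar χ, LinearMap.ext_ring <| AddMonoidHom.ext fun m => ?_⟩
  exact DFunLike.congr_fun hχ m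

theorem injective_tmul_ideal (I : Submodule Rᵐᵒᵖ R) {K : Type u} [AddCommGroup K] [Module R K]
    {i : R →ₗ[R] K} (hi : Function.Injective i) :
    Function.Injective ((RTensor.tmul R (M := I)).flip (i 1)) := by
  let μ : RTensor R I K →+ K :=
    RTensor.lift ((Module.toAddMonoidEnd R K).toAddMonoidHom.comp I.subtype.toAddMonoidHom)
      fun x r k => mul_smul (x : R) r k
  have hμ : ∀ x : I, μ (RTensor.tmul R x (i 1)) = i x := fun x => by
    change (x : R) • i 1 = i x
    rw [← map_smul, smul_eq_mul, mul_one]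
  refine Function.Injective.of_comp (f := μ) fun x y hxy => Subtype.ext (hi ?_)
  simpa [hμ] using hxy

theorem subinjective_charMod_ideal (I : Submodule Rᵐᵒᵖ R) : Subinjective R R (CharMod I) :=
  fun _ _ _ _ hi => exists_extension_charMod_of_injective_tmul _ (injective_tmul_ideal I hi)

end Subinjective

section TrivialRelation

variable (S : Type u) [Ring S] {M : Type u} [AddCommGroup M] [Module S M] {n : ℕ}

def IsTrivialRelation (r : Fin n → S) (x : Fin n → M) : Prop :=
  ∃ (m : ℕ) (a : Fin n → Fin m → S) (y : Fin m → M),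
    (∀ i, x i = ∑ j, a i j • y j) ∧ ∀ j, (∑ i, r i * a i j) = 0

theorem flatMod_iff_isTrivialRelation : FlatMod S M ↔
    ∀ (n : ℕ) (r : Fin n → S) (x : Fin n → M), ∑ i, r i • x i = 0 → IsTrivialRelation S r x :=
  Iff.rfl

def trivialRelations (r : Fin n → S) : AddSubgroup (Fin n → M) where
  carrier := {x | IsTrivialRelation S r x}
  zero_mem' := ⟨0, fun _ => Fin.elim0, Fin.elim0, fun i => by simp, fun j => j.elim0⟩
  add_mem' := by
    rintro x₁ x₂ ⟨m₁, a₁, y₁, hx₁, ha₁⟩ ⟨m₂, a₂, y₂, hx₂, ha₂⟩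
    refine ⟨m₁ + m₂, fun i => Fin.append (a₁ i) (a₂ i), Fin.append y₁ y₂, fun i => ?_,
      Fin.addCases (by simpa using ha₁) (by simpa using ha₂)⟩
    simp [Fin.sum_univ_add, hx₁ i, hx₂ i]
  neg_mem' := by
    rintro x ⟨m, a, y, hx, ha⟩
    exact ⟨m, a, -y, fun i => by simp [hx i], ha⟩

variable {S}

theorem mem_trivialRelations {r : Fin n → S} {x : Fin n → M} :
    x ∈ trivialRelations S r ↔ IsTrivialRelation S r x :=
  Iff.rfl

theorem smul_mem_trivialRelations {r a : Fin n → S} (ha : ∑ i, r i * a i = 0) (y : M) :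
    (fun i => a i • y) ∈ trivialRelations S r :=
  mem_trivialRelations.mpr ⟨1, fun i _ => a i, fun _ => y, fun i => by simp, fun _ => ha⟩

theorem IsTrivialRelation.map {N : Type u} [AddCommGroup N] [Module S N] {r : Fin n → S}
    {x : Fin n → M} (hx : IsTrivialRelation S r x) (f : M →ₗ[S] N) :
    IsTrivialRelation S r (f ∘ x) := by
  obtain ⟨m, a, y, hxy, ha⟩ := hx
  exact ⟨m, a, f ∘ y, fun i => by simp [hxy i], ha⟩

theorem flatMod_of_forall_fg_le (P : Submodule S M)
    (h : ∀ Q : Submodule S M, Q.FG → Q ≤ P → FlatMod S Q) : FlatMod S P := by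
  refine (flatMod_iff_isTrivialRelation S).mpr fun n r x hx => ?_
  let Q := Submodule.span S (Set.range fun i => (x i : M))
  have hQP : Q ≤ P := Submodule.span_le.mpr (Set.range_subset_iff.mpr fun i => (x i).2)
  let x₀ : Fin n → Q := fun i => ⟨x i, Submodule.subset_span ⟨i, rfl⟩⟩
  have hx₀ : ∑ i, r i • x₀ i = 0 := by
    apply Subtype.ext
    simpa [x₀] using congrArg Subtype.val hx
  have hQ := (flatMod_iff_isTrivialRelation S).mp
    (h Q (Submodule.fg_span (Set.finite_range _)) hQP)
  exact (hQ n r x₀ hx₀).map (Submodule.inclusion hQP)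

end TrivialRelation

theorem InjMod.exists_comp_eq_of_ker_le {S : Type u} [Ring S] {P Q E : Type u} [AddCommGroup P]
    [Module S P] [AddCommGroup Q] [Module S Q] [AddCommGroup E] [Module S E] (hE : InjMod S E)
    (σ : P →ₗ[S] Q) (g : P →ₗ[S] E) (hg : LinearMap.ker σ ≤ LinearMap.ker g) :
    ∃ H : Q →ₗ[S] E, H ∘ₗ σ = g := by
  obtain ⟨H, hH⟩ := hE (LinearMap.range σ) Q (LinearMap.range σ).subtype
    (Submodule.injective_subtype _) ((LinearMap.ker σ).liftQ g hg ∘ₗ σ.quotKerEquivRange.symm)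
  refine ⟨H, LinearMap.ext fun p => ?_⟩
  have := LinearMap.congr_fun hH ⟨σ p, LinearMap.mem_range_self σ p⟩
  simpa [LinearMap.quotKerEquivRange_symm_apply_image] using this

theorem exists_character_le_ker_apply_ne_zero {A : Type u} [AddCommGroup A] {W : AddSubgroup A}
    {x : A} (hx : x ∉ W) : ∃ Φ : A →+ AddCircle (1 : ℚ), W ≤ Φ.ker ∧ Φ x ≠ 0 := by
  have hx' : QuotientAddGroup.mk' W x ≠ 0 := fun h => hx ((QuotientAddGroup.eq_zero_iff x).mp h)
  obtain ⟨c, hc⟩ := CharacterModule.exists_character_apply_ne_zero_of_ne_zero hx'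
  refine ⟨c.comp (QuotientAddGroup.mk' W), fun w hw => ?_, hc⟩
  change c (w : A ⧸ W) = 0
  rw [(QuotientAddGroup.eq_zero_iff w).mpr hw, map_zero]

section Flat

variable {R : Type u} [Ring R] {M : Type u} [AddCommGroup M] [Module Rᵐᵒᵖ M]

theorem apply_eq_zero_of_injMod_charMod (hinj : InjMod R (CharMod M)) {n : ℕ}
    {r : Fin n → Rᵐᵒᵖ} {Φ : (Fin n → M) →+ AddCircle (1 : ℚ)}
    (hΦ : ∀ (a : Fin n → Rᵐᵒᵖ) (y : M), ∑ i, r i * a i = 0 → Φ (fun i => a i • y) = 0)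
    {x : Fin n → M} (hx : ∑ i, r i • x i = 0) : Φ x = 0 := by
  classical
  let φ : Fin n → CharMod M := fun i => Φ.comp (AddMonoidHom.single (fun _ => M) i)
  have hΦφ : ∀ z, Φ z = ∑ i, φ i (z i) := fun z => by
    conv_lhs => rw [← Finset.univ_sum_single z]
    simp [φ]
  let σ := Fintype.linearCombination R fun i => unop (r i)
  let G := Fintype.linearCombination R φ
  have hker : LinearMap.ker σ ≤ LinearMap.ker G := fun s hs => by
    ext m
    have hs' : ∑ i, r i * op (s i) = 0 := by
      simpa [σ, Fintype.linearCombination_apply] using congrArg op hs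
    simpa [G, Fintype.linearCombination_apply, CharMod.smul_apply, hΦφ] using hΦ _ m hs'
  obtain ⟨H, hH⟩ := hinj.exists_comp_eq_of_ker_le σ G hker
  have hφ : ∀ i, φ i = unop (r i) • H 1 := fun i => by
    have := LinearMap.congr_fun hH (Pi.single i 1)
    simp only [LinearMap.comp_apply, σ, G, Fintype.linearCombination_apply_single] at this
    rw [one_smul, one_smul] at this
    rw [← this, ← map_smul, smul_eq_mul, mul_one]
  calc Φ x = ∑ i, H 1 (r i • x i) := by simp [hΦφ, hφ, CharMod.smul_apply]
    _ = 0 := by rw [← map_sum, hx, map_zero]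

theorem flatMod_of_injMod_charMod (hinj : InjMod R (CharMod M)) : FlatMod Rᵐᵒᵖ M := by
  refine (flatMod_iff_isTrivialRelation _).mpr fun n r x hx => ?_
  by_contra hnot
  obtain ⟨Φ, hW, hΦx⟩ := exists_character_le_ker_apply_ne_zero
    (W := trivialRelations Rᵐᵒᵖ r) (x := x) hnot
  exact hΦx (apply_eq_zero_of_injMod_charMod hinj
    (fun a y ha => hW (smul_mem_trivialRelations ha y)) hx)

end Flat

theorem stmt_8_general {R : Type u} [Ring R]
    (h : ∀ I : Submodule Rᵐᵒᵖ R, I.FG →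
      InjMod R (CharMod I) ∨ PiIndigent R (CharMod I)) :
    AbsPure R R ∨ ∀ I : Submodule Rᵐᵒᵖ R, FlatMod Rᵐᵒᵖ I := by
  refine or_iff_not_imp_left.mpr fun hA I => flatMod_of_forall_fg_le I fun J hJ _ => ?_
  refine flatMod_of_injMod_charMod ((h J hJ).resolve_right fun hpi => hA ?_)
  exact (hpi.2 R).mp (subinjective_charMod_ideal J)

theorem stmt_8 {R : Type u} [Ring R] (hreg : ¬ IsVNR R)
    (h : ∀ I : Submodule Rᵐᵒᵖ R, I.FG →
      InjMod R (CharMod I) ∨ PiIndigent R (CharMod I)) :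
    AbsPure R R ∨ ∀ I : Submodule Rᵐᵒᵖ R, FlatMod Rᵐᵒᵖ I :=
  stmt_8_general h
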